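/- There exists an absolute constant c′ ∈ (0,1) such that for all integers 1 ≤ r ≤ k ≤ c′·p₁ with r ≤ p₂ and every ε > 0, there exists a finite set 𝕏″ of real p₁×p₂ matrices with the following properties: (i) every X ∈ 𝕏″ has at most k nonzero rows, rank(X) ≤ r, and ‖X‖_F = ε; (ii) log|𝕏″| ≥ (4/25)·k·log(p₁/k) + (3/25)·r·k; (iii) ‖X₁ − X₂‖_F ≥ ε/2 for all distinct X₁, X₂ ∈ 𝕏″. -/

import Mathlib

noncomputable section
open MeasureTheory

/-- Frobenius norm of a real matrix. -/
def frobNorm {a b : ℕ} (X : Matrix (Fin a) (Fin b) ℝ) : ℝ :=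
  Real.sqrt (∑ i, ∑ j, (X i j) ^ 2)

/-- Euclidean norm of a vector. -/
def l2Norm {n : ℕ} (v : Fin n → ℝ) : ℝ :=
  Real.sqrt (∑ i, (v i) ^ 2)

/-- Sum of Euclidean norms of the rows (ℓ_{1,2} norm). -/
def l12Norm {a b : ℕ} (X : Matrix (Fin a) (Fin b) ℝ) : ℝ :=
  ∑ i, Real.sqrt (∑ j, (X i j) ^ 2)

/-- Nuclear norm: sum of the singular values of `X`. -/
def nuclearNorm {a b : ℕ} (X : Matrix (Fin a) (Fin b) ℝ) : ℝ :=
  ∑ i, Real.sqrt ((Matrix.isHermitian_conjTranspose_mul_self X).eigenvalues i)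

/-- Spectral norm (ℓ₂ operator norm). -/
def specNorm {a b : ℕ} (X : Matrix (Fin a) (Fin b) ℝ) : ℝ :=
  sSup ((fun v => l2Norm (X.mulVec v)) '' {v | l2Norm v ≤ 1})

/-- Number of nonzero rows. -/
def rowSparsity {a b : ℕ} (X : Matrix (Fin a) (Fin b) ℝ) : ℕ :=
  {i | X i ≠ 0}.ncard

/-- The set 𝕏_{k,r} of matrices with at most `k` nonzero rows and rank at most `r`. -/
def sparseLowRank (p₁ p₂ k r : ℕ) : Set (Matrix (Fin p₁) (Fin p₂) ℝ) :=
  {X | rowSparsity X ≤ k ∧ X.rank ≤ r}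

/-- Gaussian measure on ℝⁿ with mean `μ` and covariance `σ² Iₙ`. -/
def gaussianPi (n : ℕ) (μ : Fin n → ℝ) (σ : ℝ) : Measure (Fin n → ℝ) :=
  Measure.pi fun i => ProbabilityTheory.gaussianReal (μ i) (Real.toNNReal (σ ^ 2))

/-!
Every matrix of the family is `ε / √(k r)` times a `±1` pattern supported on `k` rows and the
first `r` columns. The first `k b` rows, `b = ⌊p₁ / k⌋`, are cut into `k` blocks of `b` rows; a
pattern takes one row from each block, chosen by `f : Fin k → Fin b`, and fills it with the signs
`σ : Fin k × Fin r → Bool`. In terms of Hamming distances, two patterns with `f ≠ g` are at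
squared distance at least `2 r · d(f, g)`, two with the same `f` at squared distance `4 · d(σ, τ)`.
Hence Gilbert–Varshamov codes of relative distance `1/8` for the row choices and `1/16` for the
signs give pairwise distances `≥ ε / 2`; their sizes are at least `(p₁ / k) ^ (4k/25)` and
`exp (3kr/25)`.
-/

open Finset Function Real

section HammingCode

lemma exists_pairwise_not_rel_card_le_mul {γ : Type*} [Fintype γ] (R : γ → γ → Prop)
    [DecidableRel R] (hR : ∀ x, R x x) (hRs : ∀ x y, R x y → R y x) {B : ℕ}
    (hB : ∀ x, #{y | R x y} ≤ B) :
    ∃ C : Finset γ, (C : Set γ).Pairwise (fun x y => ¬ R x y) ∧ Fintype.card γ ≤ #C * B := by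
  classical
  obtain ⟨C, hC, hmax⟩ := exists_max_image
    ({C : Finset γ | (C : Set γ).Pairwise fun x y => ¬ R x y} : Finset (Finset γ)) card
    ⟨∅, by simp⟩
  rw [mem_filter] at hC
  refine ⟨C, hC.2, ?_⟩
  have hcover : ∀ y, ∃ c ∈ C, R c y := by
    by_contra! hfar
    obtain ⟨y, hy⟩ := hfar
    have hyC : y ∉ C := fun h => hy y h (hR y)
    have hins := hmax (insert y C) <| mem_filter.2 ⟨mem_univ _, by
      rw [coe_insert, Set.pairwise_insert_of_notMem hyC]
      exact ⟨hC.2, fun c hc => ⟨fun h => hy c hc (hRs _ _ h), hy c hc⟩⟩⟩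
    rw [card_insert_of_notMem hyC] at hins
    omega
  calc Fintype.card γ = #(univ : Finset γ) := card_univ.symm
    _ ≤ #(C.biUnion fun c => {y | R c y}) :=
        card_le_card fun y _ => by simpa using hcover y
    _ ≤ ∑ c ∈ C, #{y | R c y} := card_biUnion_le
    _ ≤ #C * B := by simpa using sum_le_card_nsmul C _ B fun c _ => hB c

variable {α β : Type*} [Fintype α] [Fintype β]

lemma card_filter_card_le_mul_pow_le (m : ℕ) {t : ℝ} (ht₀ : 0 ≤ t) (ht₁ : t ≤ 1) :
    (#{A : Finset α | #A ≤ m} : ℝ) * t ^ m ≤ (1 + t) ^ Fintype.card α := by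
  calc (#{A : Finset α | #A ≤ m} : ℝ) * t ^ m = ∑ A : Finset α with #A ≤ m, t ^ m := by
        rw [sum_const, nsmul_eq_mul]
    _ ≤ ∑ A : Finset α with #A ≤ m, t ^ #A :=
        sum_le_sum fun A hA => pow_le_pow_of_le_one ht₀ ht₁ (mem_filter.1 hA).2
    _ ≤ ∑ A : Finset α, t ^ #A * 1 ^ (Fintype.card α - #A) := by
        simp only [one_pow, mul_one]
        exact sum_le_sum_of_subset_of_nonneg (filter_subset _ _) fun A _ _ => by positivity
    _ = (1 + t) ^ Fintype.card α := by rw [Fintype.sum_pow_mul_eq_add_pow, add_comm]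

lemma card_hammingDist_le_le [DecidableEq α] [DecidableEq β] [Nonempty β] (x : α → β) (m : ℕ) :
    #{y | hammingDist x y ≤ m} ≤ #{A : Finset α | #A ≤ m} * Fintype.card β ^ m := by
  let fill (A : Finset α) (g : A → β) : α → β := fun i => if h : i ∈ A then g ⟨i, h⟩ else x i
  calc #{y | hammingDist x y ≤ m}
      ≤ #(({A : Finset α | #A ≤ m} : Finset (Finset α)).biUnion fun A => univ.image (fill A)) := by
        refine card_le_card fun y hy => mem_biUnion.2 ⟨({i | x i ≠ y i} : Finset α), ?_, ?_⟩
        · simpa [hammingDist] using hy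
        · refine mem_image.2 ⟨fun i => y i, mem_univ _, funext fun i => ?_⟩
          by_cases h : x i = y i <;> simp [fill, h]
    _ ≤ ∑ A : Finset α with #A ≤ m, #(univ.image (fill A)) := card_biUnion_le
    _ ≤ ∑ A : Finset α with #A ≤ m, Fintype.card β ^ m := by
        refine sum_le_sum fun A hA => card_image_le.trans ?_
        rw [card_univ, Fintype.card_fun, Fintype.card_coe]
        exact pow_le_pow_right₀ Fintype.card_pos (mem_filter.1 hA).2
    _ = #{A : Finset α | #A ≤ m} * Fintype.card β ^ m := by rw [sum_const, smul_eq_mul]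

lemma exists_hammingCode [DecidableEq α] [DecidableEq β] [Nonempty β] (m : ℕ) {t : ℝ}
    (ht₀ : 0 < t) (ht₁ : t ≤ 1) :
    ∃ C : Finset (α → β), (C : Set (α → β)).Pairwise (fun x y => m < hammingDist x y) ∧
      C.Nonempty ∧ Fintype.card α * log (Fintype.card β) + m * log t
        ≤ log #C + Fintype.card α * log (1 + t) + m * log (Fintype.card β) := by
  obtain ⟨C, hC, hcard⟩ := exists_pairwise_not_rel_card_le_mul
    (fun x y : α → β => hammingDist x y ≤ m) (fun x => by simp)
    (fun x y h => by simpa only [hammingDist_comm] using h) (card_hammingDist_le_le · m)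
  set n := Fintype.card α
  set q := Fintype.card β
  have hq : (0 : ℝ) < q := by exact_mod_cast Fintype.card_pos
  rw [Fintype.card_fun] at hcard
  have hCpos : 0 < #C := Nat.pos_of_ne_zero fun h => by simp [h, q] at hcard
  refine ⟨C, hC.mono' fun x y h => not_le.1 h, card_pos.1 hCpos, ?_⟩
  have hC₀ : (0 : ℝ) < #C := by exact_mod_cast hCpos
  have key : (q : ℝ) ^ n * t ^ m ≤ #C * (1 + t) ^ n * q ^ m := by
    have hcardR : (q : ℝ) ^ n ≤ #C * (#{A : Finset α | #A ≤ m} * q ^ m) := by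
      exact_mod_cast hcard
    calc (q : ℝ) ^ n * t ^ m ≤ #C * (#{A : Finset α | #A ≤ m} * t ^ m) * q ^ m := by
          nlinarith [pow_pos ht₀ m]
      _ ≤ #C * (1 + t) ^ n * q ^ m := by
          gcongr
          exact card_filter_card_le_mul_pow_le m ht₀.le ht₁
  have := log_le_log (by positivity) key
  rwa [log_mul (by positivity) (by positivity), log_mul (by positivity) (by positivity),
    log_mul (by positivity) (by positivity), log_pow, log_pow, log_pow, log_pow] at this

lemma exists_binaryCode (ι : Type*) [Fintype ι] [DecidableEq ι] :
    ∃ C : Finset (ι → Bool), (C : Set (ι → Bool)).Pairwise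
      (fun σ τ => Fintype.card ι ≤ 16 * hammingDist σ τ) ∧ C.Nonempty ∧
      3 / 25 * Fintype.card ι ≤ log #C := by
  -- `t = 1/3` leaves `log #C ≥ (15 log 3 - 17 log 2) / 16 · n ≈ 0.29 n` for `n = card ι`.
  obtain ⟨C, hC, hne, hcard⟩ := exists_hammingCode (α := ι) (β := Bool) (Fintype.card ι / 16)
    (by norm_num : (0 : ℝ) < 1 / 3) (by norm_num)
  refine ⟨C, hC.mono' fun σ τ h => by omega, hne, ?_⟩
  have hm : ((Fintype.card ι / 16 : ℕ) : ℝ) ≤ Fintype.card ι / 16 := Nat.cast_div_le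
  have hlog : log (1 + 3⁻¹) = 2 * log 2 - log 3 := by
    rw [show (1 : ℝ) + 3⁻¹ = 2 ^ 2 / 3 by norm_num, log_div (by norm_num) (by norm_num), log_pow]
    norm_num
  rw [Fintype.card_bool, Nat.cast_ofNat, one_div, log_inv, hlog] at hcard
  have h₂ := log_two_lt_d9
  have h₃ := log_three_gt_d9
  have hn : (0 : ℝ) ≤ Fintype.card ι := Nat.cast_nonneg _
  nlinarith [mul_le_mul_of_nonneg_right hm (by positivity : 0 ≤ log 3 + log 2)]

lemma exists_rowSelectionCode {p k : ℕ} (hk : 0 < k) (hp : 4 * k ≤ p) :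
    ∃ C : Finset (Fin k → Fin (p / k)), (C : Set (Fin k → Fin (p / k))).Pairwise
      (fun f g => k ≤ 8 * hammingDist f g) ∧ C.Nonempty ∧ 4 / 25 * k * log (p / k) ≤ log #C := by
  set b := p / k
  have hb : 4 ≤ b := (Nat.le_div_iff_mul_le hk).2 (by linarith)
  have : Nonempty (Fin b) := ⟨⟨0, by omega⟩⟩
  -- `t = 1` leaves `log #C ≥ 7/8 · k log b - k log 2`, while `log (p / k) ≤ log (2 b)`.
  obtain ⟨C, hC, hne, hcard⟩ := exists_hammingCode (α := Fin k) (β := Fin b) (k / 8) one_pos le_rfl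
  refine ⟨C, hC.mono' fun f g h => by omega, hne, ?_⟩
  simp only [Fintype.card_fin, log_one, mul_zero, add_zero, one_add_one_eq_two] at hcard
  have hs : ((k / 8 : ℕ) : ℝ) ≤ k / 8 := Nat.cast_div_le
  have hkR : (0 : ℝ) < k := by exact_mod_cast hk
  have hbR : (4 : ℝ) ≤ b := by exact_mod_cast hb
  have hb₀ : (0 : ℝ) < b := by linarith
  have hlogb : 2 * log 2 ≤ log b := by
    rw [← log_rpow two_pos]
    exact log_le_log (by norm_num) (by norm_num; linarith)
  have hpk : log (p / k) ≤ log 2 + log b := by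
    rw [← log_mul two_ne_zero hb₀.ne']
    have hpR : (4 * k : ℝ) ≤ p := by exact_mod_cast hp
    refine log_le_log (div_pos (by linarith) hkR) ((div_le_iff₀ hkR).2 ?_)
    have : p < k * (b + 1) := Nat.lt_mul_div_succ p hk
    have : (p : ℝ) < k * (b + 1) := by exact_mod_cast this
    nlinarith [mul_le_mul_of_nonneg_left hbR hkR.le]
  have h₂ := log_two_gt_d9
  nlinarith [mul_le_mul_of_nonneg_right hs (by linarith : 0 ≤ log b),
    mul_le_mul_of_nonneg_left hpk hkR.le, mul_le_mul_of_nonneg_left hlogb hkR.le]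

end HammingCode

section ExtendByZero

lemma Function.Injective.sum_extend_zero {α β M N : Type*} [Fintype α] [Fintype β] [Zero M]
    [AddCommMonoid N] {f : α → β} (hf : Injective f) (F : α → M) {g : M → N} (hg : g 0 = 0) :
    ∑ b, g (extend f F 0 b) = ∑ a, g (F a) := by
  classical
  calc ∑ b, g (extend f F 0 b) = ∑ b ∈ univ.image f, g (extend f F 0 b) := by
        refine (sum_subset (subset_univ _) fun b _ hb => ?_).symm
        rw [extend_apply' _ _ _ (by simpa using hb), Pi.zero_apply, hg]
    _ = ∑ a, g (F a) := by rw [sum_image hf.injOn]; simp [hf.extend_apply]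

lemma Matrix.rank_le_card_of_forall_notMem_eq_zero {m n K : Type*} [Fintype m] [Fintype n]
    [Field K] (X : Matrix m n K) (s : Finset n) (h : ∀ i, ∀ j ∉ s, X i j = 0) :
    X.rank ≤ #s := by
  classical
  have hX : X = X * Matrix.diagonal fun j => if j ∈ s then (1 : K) else 0 := by
    ext i j
    by_cases hj : j ∈ s <;> simp [hj, h i j]
  calc X.rank ≤ (Matrix.diagonal fun j => if j ∈ s then (1 : K) else 0).rank := by
        conv_lhs => rw [hX]
        exact Matrix.rank_mul_le_right _ _
    _ = #s := by rw [Matrix.rank_diagonal]; simp [Fintype.card_subtype]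

lemma Matrix.sum_sq_smul {m n : Type*} [Fintype m] [Fintype n] (a : ℝ) (M : Matrix m n ℝ) :
    ∑ x, ∑ y, (a • M) x y ^ 2 = a ^ 2 * ∑ x, ∑ y, M x y ^ 2 := by
  simp [mul_pow, mul_sum]

variable {α β m n : Type*}

def Matrix.extendByZero (ρ : α → m) (γ : β → n) (M : Matrix α β ℝ) : Matrix m n ℝ :=
  fun i j => extend (Prod.map ρ γ) (fun p => M p.1 p.2) 0 (i, j)

namespace Matrix

variable {ρ : α → m} {γ : β → n}

lemma extendByZero_apply (hρ : Injective ρ) (hγ : Injective γ) (M : Matrix α β ℝ) (x : α)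
    (y : β) : extendByZero ρ γ M (ρ x) (γ y) = M x y :=
  (hρ.prodMap hγ).extend_apply _ _ (x, y)

lemma extendByZero_apply_eq_zero (M : Matrix α β ℝ) {i : m} {j : n}
    (h : ¬∃ x y, ρ x = i ∧ γ y = j) : extendByZero ρ γ M i j = 0 :=
  extend_apply' _ _ _ fun ⟨⟨x, y⟩, hxy⟩ => h ⟨x, y, by simp_all [Prod.ext_iff]⟩

lemma extendByZero_sub (M N : Matrix α β ℝ) :
    extendByZero ρ γ (M - N) = extendByZero ρ γ M - extendByZero ρ γ N := by
  classical
  ext i j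
  simp only [extendByZero, extend_def, sub_apply]
  split_ifs <;> simp

lemma sum_sq_extendByZero [Fintype α] [Fintype β] [Fintype m] [Fintype n]
    (hρ : Injective ρ) (hγ : Injective γ) (M : Matrix α β ℝ) :
    ∑ i, ∑ j, extendByZero ρ γ M i j ^ 2 = ∑ x, ∑ y, M x y ^ 2 := by
  simp only [← Fintype.sum_prod_type']
  exact (hρ.prodMap hγ).sum_extend_zero (fun p => M p.1 p.2) (g := fun v : ℝ => v ^ 2) (by simp)

lemma rank_extendByZero_le [Fintype β] [Fintype m] [Fintype n] (M : Matrix α β ℝ) :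
    (extendByZero ρ γ M).rank ≤ Fintype.card β := by
  classical
  exact ((extendByZero ρ γ M).rank_le_card_of_forall_notMem_eq_zero (univ.image γ)
    fun _ _ hj => extendByZero_apply_eq_zero M fun ⟨_, y, _, hy⟩ => hj (by simp [← hy])).trans
    card_image_le

end Matrix

open Matrix

variable [Fintype α] {p q : ℕ} {ρ : α → Fin p} {γ : β → Fin q}

lemma rowSparsity_extendByZero_le (hρ : Injective ρ) (hγ : Injective γ) (M : Matrix α β ℝ) :
    rowSparsity (extendByZero ρ γ M) ≤ {x | M x ≠ 0}.ncard := by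
  have hrows : {i | extendByZero ρ γ M i ≠ 0} ⊆ ρ '' {x | M x ≠ 0} := by
    intro i hi
    obtain ⟨j, hj⟩ := Function.ne_iff.1 hi
    by_contra hno
    refine hj (extendByZero_apply_eq_zero M fun ⟨x, y, hx, hy⟩ => hno ⟨x, fun hMx => hj ?_, hx⟩)
    rw [← hx, ← hy, extendByZero_apply hρ hγ, hMx, Pi.zero_apply, Pi.zero_apply]
  exact (Set.ncard_le_ncard hrows).trans Set.ncard_image_le

lemma frobNorm_extendByZero [Fintype β] (hρ : Injective ρ) (hγ : Injective γ)
    (M : Matrix α β ℝ) : frobNorm (extendByZero ρ γ M) = √(∑ x, ∑ y, M x y ^ 2) := by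
  rw [frobNorm, sum_sq_extendByZero hρ hγ]

end ExtendByZero

section BlockSignPattern

variable {ι B J : Type*} [DecidableEq B]

def blockSignPattern (f : ι → B) (σ : ι × J → Bool) : Matrix (ι × B) J ℝ :=
  fun x j => if f x.1 = x.2 then (if σ (x.1, j) then 1 else -1) else 0

lemma sum_sq_sub_blockSignPattern_col [Fintype B] (f g : ι → B) (σ τ : ι × J → Bool) (c : ι)
    (j : J) :
    ∑ t, (blockSignPattern f σ (c, t) j - blockSignPattern g τ (c, t) j) ^ 2 =
      if f c = g c then (if σ (c, j) = τ (c, j) then 0 else 4) else 2 := by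
  by_cases hfg : f c = g c
  · have hterm : ∀ t, (blockSignPattern f σ (c, t) j - blockSignPattern g τ (c, t) j) ^ 2 =
        if f c = t then (if σ (c, j) = τ (c, j) then 0 else 4) else 0 := by
      intro t
      by_cases h₁ : f c = t <;> by_cases hσ : σ (c, j) <;> by_cases hτ : τ (c, j) <;>
        simp [blockSignPattern, h₁, hσ, hτ, ← hfg] <;> norm_num
    simp only [hterm, Fintype.sum_ite_eq, hfg, if_true]
  · have hterm : ∀ t, (blockSignPattern f σ (c, t) j - blockSignPattern g τ (c, t) j) ^ 2 =
        (if f c = t then 1 else 0) + (if g c = t then 1 else 0) := by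
      intro t
      by_cases h₁ : f c = t <;> by_cases h₂ : g c = t
      · exact absurd (h₁.trans h₂.symm) hfg
      all_goals by_cases hσ : σ (c, j) <;> by_cases hτ : τ (c, j) <;>
        simp [blockSignPattern, h₁, h₂, hσ, hτ]
    simp only [hterm, sum_add_distrib, Fintype.sum_ite_eq, hfg, if_false]
    norm_num

lemma ncard_smul_blockSignPattern_rows_ne_zero_le [Fintype ι] (a : ℝ) (f : ι → B)
    (σ : ι × J → Bool) : {x | (a • blockSignPattern f σ) x ≠ 0}.ncard ≤ Fintype.card ι := by
  have hrows : {x | (a • blockSignPattern f σ) x ≠ 0} ⊆ Set.range fun c => (c, f c) := by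
    rintro ⟨c, t⟩ hx
    by_contra hno
    have hft : f c ≠ t := fun h => hno ⟨c, by simp [h]⟩
    exact hx (funext fun j => by simp [blockSignPattern, hft])
  calc {x | (a • blockSignPattern f σ) x ≠ 0}.ncard ≤ (Set.range fun c => (c, f c)).ncard :=
        Set.ncard_le_ncard hrows
    _ = Fintype.card ι := by
        rw [Set.ncard_range_of_injective fun c c' h => (Prod.ext_iff.1 h).1,
          Nat.card_eq_fintype_card]

variable [Fintype ι] [Fintype B] [Fintype J]

lemma sum_blockSignPattern_eq (F : ℝ → ℝ → ℝ) (f g : ι → B) (σ τ : ι × J → Bool) :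
    ∑ x, ∑ j, F (blockSignPattern f σ x j) (blockSignPattern g τ x j) =
      ∑ c, ∑ j, ∑ t, F (blockSignPattern f σ (c, t) j) (blockSignPattern g τ (c, t) j) := by
  rw [Fintype.sum_prod_type]
  exact sum_congr rfl fun c _ => sum_comm

lemma sum_sq_blockSignPattern (f : ι → B) (σ : ι × J → Bool) :
    ∑ x, ∑ j, blockSignPattern f σ x j ^ 2 = Fintype.card ι * Fintype.card J := by
  rw [sum_blockSignPattern_eq (fun u _ => u ^ 2) f f σ σ]
  simp [blockSignPattern, apply_ite (· ^ 2)]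

lemma two_mul_card_mul_hammingDist_le_sum_sq_sub (f g : ι → B) (σ τ : ι × J → Bool) :
    (2 * Fintype.card J * hammingDist f g : ℝ) ≤
      ∑ x, ∑ j, (blockSignPattern f σ x j - blockSignPattern g τ x j) ^ 2 := by
  rw [sum_blockSignPattern_eq (fun u v => (u - v) ^ 2)]
  simp only [sum_sq_sub_blockSignPattern_col]
  calc (2 * Fintype.card J * hammingDist f g : ℝ)
      = ∑ c, ∑ _j : J, if f c = g c then (0 : ℝ) else 2 := by
        simp [hammingDist, sum_ite, mul_comm]
    _ ≤ _ := by
        gcongr with c _ j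
        split_ifs <;> norm_num

lemma sum_sq_sub_blockSignPattern_self (f : ι → B) (σ τ : ι × J → Bool) :
    ∑ x, ∑ j, (blockSignPattern f σ x j - blockSignPattern f τ x j) ^ 2 = 4 * hammingDist σ τ := by
  rw [sum_blockSignPattern_eq (fun u v => (u - v) ^ 2)]
  simp only [sum_sq_sub_blockSignPattern_col, if_true]
  rw [← Fintype.sum_prod_type' (fun c j => if σ (c, j) = τ (c, j) then (0 : ℝ) else 4)]
  simp [hammingDist, sum_ite, mul_comm]

lemma card_mul_card_le_four_mul_sum_sq_sub {f g : ι → B} {σ τ : ι × J → Bool}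
    (hne : (f, σ) ≠ (g, τ)) (hf : f ≠ g → Fintype.card ι ≤ 8 * hammingDist f g)
    (hσ : σ ≠ τ → Fintype.card ι * Fintype.card J ≤ 16 * hammingDist σ τ) :
    (Fintype.card ι * Fintype.card J : ℝ) ≤
      4 * ∑ x, ∑ j, (blockSignPattern f σ x j - blockSignPattern g τ x j) ^ 2 := by
  by_cases hfg : f = g
  · subst hfg
    have h16 : (Fintype.card ι * Fintype.card J : ℝ) ≤ 16 * hammingDist σ τ := by
      exact_mod_cast hσ fun h => hne (by rw [h])
    rw [sum_sq_sub_blockSignPattern_self]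
    linarith
  · have h8 : (Fintype.card ι : ℝ) ≤ 8 * hammingDist f g := by exact_mod_cast hf hfg
    have := two_mul_card_mul_hammingDist_le_sum_sq_sub f g σ τ
    nlinarith

end BlockSignPattern

open Matrix in
lemma exists_sparse_lowRank_packing {p₁ p₂ k b r : ℕ} (hkb : k * b ≤ p₁) (hrp : r ≤ p₂)
    (hkr : 0 < k * r) {ε : ℝ} (hε : 0 < ε) (Cf : Finset (Fin k → Fin b))
    (Cσ : Finset (Fin k × Fin r → Bool))
    (hCf : (Cf : Set (Fin k → Fin b)).Pairwise fun f g => k ≤ 8 * hammingDist f g)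
    (hCσ : (Cσ : Set (Fin k × Fin r → Bool)).Pairwise fun σ τ => k * r ≤ 16 * hammingDist σ τ) :
    ∃ 𝕏 : Finset (Matrix (Fin p₁) (Fin p₂) ℝ),
      (∀ X ∈ 𝕏, rowSparsity X ≤ k ∧ X.rank ≤ r ∧ frobNorm X = ε) ∧ #𝕏 = #Cf * #Cσ ∧
      ∀ X₁ ∈ 𝕏, ∀ X₂ ∈ 𝕏, X₁ ≠ X₂ → ε / 2 ≤ frobNorm (X₁ - X₂) := by
  let ρ := Fin.castLE hkb ∘ finProdFinEquiv
  have hρ : Injective ρ := (Fin.castLE_injective hkb).comp finProdFinEquiv.injective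
  have hγ : Injective (Fin.castLE hrp) := Fin.castLE_injective hrp
  set a := ε / √(k * r : ℝ)
  have ha : a ^ 2 * (k * r) = ε ^ 2 := by
    have : (0 : ℝ) < k * r := by exact_mod_cast hkr
    rw [div_pow, Real.sq_sqrt this.le, div_mul_cancel₀ _ this.ne']
  let X (w : (Fin k → Fin b) × (Fin k × Fin r → Bool)) : Matrix (Fin p₁) (Fin p₂) ℝ :=
    extendByZero ρ (Fin.castLE hrp) (a • blockSignPattern w.1 w.2)
  have hnorm : ∀ w, frobNorm (X w) = ε := by
    intro w
    rw [frobNorm_extendByZero hρ hγ, sum_sq_smul, sum_sq_blockSignPattern]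
    simp [ha, hε.le]
  have hsep : ∀ w ∈ Cf ×ˢ Cσ, ∀ w' ∈ Cf ×ˢ Cσ, w ≠ w' → ε / 2 ≤ frobNorm (X w - X w') := by
    rintro ⟨f, σ⟩ hw ⟨g, τ⟩ hw' hne
    rw [mem_product] at hw hw'
    have hsum := card_mul_card_le_four_mul_sum_sq_sub hne
      (by simpa using hCf hw.1 hw'.1) (by simpa using hCσ hw.2 hw'.2)
    simp only [Fintype.card_fin] at hsum
    rw [← extendByZero_sub, ← smul_sub, frobNorm_extendByZero hρ hγ, sum_sq_smul]
    simp only [Matrix.sub_apply]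
    refine Real.le_sqrt_of_sq_le ?_
    nlinarith [sq_nonneg a]
  have hinj : Set.InjOn X ↑(Cf ×ˢ Cσ) := fun w hw w' hw' h => by
    by_contra hne
    have := hsep w hw w' hw' hne
    rw [h, sub_self] at this
    simp [frobNorm] at this
    linarith
  refine ⟨(Cf ×ˢ Cσ).image X, ?_, by rw [card_image_of_injOn hinj, card_product], ?_⟩
  · simp only [mem_image]
    rintro _ ⟨⟨f, σ⟩, -, rfl⟩
    refine ⟨?_, ?_, hnorm _⟩
    · simpa using (rowSparsity_extendByZero_le hρ hγ _).trans
        (ncard_smul_blockSignPattern_rows_ne_zero_le a f σ)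
    · simpa using rank_extendByZero_le (ρ := ρ) (γ := Fin.castLE hrp) (a • blockSignPattern f σ)
  · simp only [mem_image]
    rintro _ ⟨w, hw, rfl⟩ _ ⟨w', hw', rfl⟩ hne
    exact hsep w hw w' hw' fun h => hne (h ▸ rfl)

/-- existence of the packing set 𝕏″. -/
theorem packing_set_column_partition :
    ∃ c' : ℝ, 0 < c' ∧ c' < 1 ∧
    ∀ (p₁ p₂ k r : ℕ), 1 ≤ r → r ≤ k → (k : ℝ) ≤ c' * p₁ → r ≤ p₂ →
    ∀ ε : ℝ, 0 < ε →
    ∃ 𝕏'' : Finset (Matrix (Fin p₁) (Fin p₂) ℝ),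
      (∀ X ∈ 𝕏'', rowSparsity X ≤ k ∧ X.rank ≤ r ∧ frobNorm X = ε) ∧
      Real.log 𝕏''.card ≥ (4 / 25) * k * Real.log (p₁ / k) + (3 / 25) * r * k ∧
      ∀ X₁ ∈ 𝕏'', ∀ X₂ ∈ 𝕏'', X₁ ≠ X₂ → frobNorm (X₁ - X₂) ≥ ε / 2 := by
  refine ⟨1 / 4, by norm_num, by norm_num, ?_⟩
  intro p₁ p₂ k r hr hrk hkp hrp ε hε
  have hk : 0 < k := by omega
  have hp : 4 * k ≤ p₁ := by exact_mod_cast (by linarith : (4 * k : ℝ) ≤ p₁)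
  obtain ⟨Cf, hCf, hCf₀, hCf_card⟩ := exists_rowSelectionCode hk hp
  obtain ⟨Cσ, hCσ, hCσ₀, hCσ_card⟩ := exists_binaryCode (Fin k × Fin r)
  simp only [Fintype.card_prod, Fintype.card_fin] at hCσ hCσ_card
  obtain ⟨𝕏, hmem, hcard, hsep⟩ := exists_sparse_lowRank_packing (Nat.mul_div_le p₁ k) hrp
    (Nat.mul_pos hk hr) hε Cf Cσ hCf hCσ
  refine ⟨𝕏, hmem, ?_, hsep⟩
  rw [hcard, Nat.cast_mul, log_mul (by simpa using hCf₀.ne_empty) (by simpa using hCσ₀.ne_empty)]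
  push_cast at hCσ_card
  linarith
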